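/- arXiv:1701.05990 — 9 statements merged into one kernel-verified Lean document; each statement's English description precedes it below -/
import Mathlib

section
/- Let K be a field of characteristic zero and A a unital K-algebra such that every K-subalgebra of A generated by finitely many elements is finite dimensional over K. If D is a locally finite K-derivation of A, then the image D(A) of D contains no nonzero idempotent of A, i.e., for every e ∈ A with e^2 = e and e ∈ D(A), one has e = 0. -/
/-!
Write `e = D a`. The iterates `Dⁱ a` span a finite-dimensional `D`-stable subspace, and by the
Leibniz rule the subalgebra `B` generated by a basis of it is again `D`-stable; it is
finite-dimensional by hypothesis. On `B` the Leibniz rule reads `L_{D a} = [D, L_a]`, so left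
multiplication by `e` has trace zero. Being idempotent, it is a projection whose trace is its
rank, so in characteristic zero it vanishes and `e = e * 1 = 0`.
-/

open LinearMap Submodule

theorem Module.End.apply_mem_span_range_pow_apply {R M : Type*} [Semiring R] [AddCommMonoid M]
    [Module R M] (f : Module.End R M) (a : M) {x : M}
    (hx : x ∈ span R (Set.range fun i : ℕ => (f ^ i) a)) :
    f x ∈ span R (Set.range fun i : ℕ => (f ^ i) a) := by
  have hle : span R (Set.range fun i : ℕ => (f ^ i) a) ≤
      (span R (Set.range fun i : ℕ => (f ^ i) a)).comap f := by
    rw [span_le]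
    rintro _ ⟨i, rfl⟩
    exact subset_span ⟨i + 1,
      show (f ^ (i + 1)) a = f ((f ^ i) a) by rw [pow_succ', Module.End.mul_apply]⟩
  exact hle hx

theorem IsIdempotentElem.eq_zero_of_trace_mulLeft_eq_zero {K B : Type*} [Field K] [CharZero K]
    [Ring B] [Algebra K B] [FiniteDimensional K B] {e : B} (he : IsIdempotentElem e)
    (htr : trace K B (mulLeft K e) = 0) : e = 0 := by
  have : mulLeft K e = 0 :=
    LinearMap.IsIdempotentElem.eq_zero_of_trace_eq_zero (he.map (Algebra.lmul K B)) htr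
  simpa using congr($this 1)

section Leibniz

variable {K A : Type*} [CommRing K] [Ring A] [Algebra K A] {D : A →ₗ[K] A}

theorem map_one_eq_zero_of_leibniz (hD : ∀ a b, D (a * b) = D a * b + a * D b) : D 1 = 0 := by
  simpa using hD 1 1

theorem mulLeft_map_eq_commutator_of_leibniz (hD : ∀ a b, D (a * b) = D a * b + a * D b)
    (a : A) : mulLeft K (D a) = D * mulLeft K a - mulLeft K a * D := by
  ext x
  simp [hD]

theorem trace_mulLeft_map_eq_zero_of_leibniz [Module.Free K A] [Module.Finite K A]
    (hD : ∀ a b, D (a * b) = D a * b + a * D b) (a : A) :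
    trace K A (mulLeft K (D a)) = 0 := by
  rw [mulLeft_map_eq_commutator_of_leibniz hD, map_sub, trace_mul_comm, sub_self]

theorem map_mem_adjoin_of_leibniz (hD : ∀ a b, D (a * b) = D a * b + a * D b) {s : Set A}
    (hs : ∀ x ∈ s, D x ∈ Algebra.adjoin K s) {x : A} (hx : x ∈ Algebra.adjoin K s) :
    D x ∈ Algebra.adjoin K s := by
  induction hx using Algebra.adjoin_induction with
  | mem x hx => exact hs x hx
  | algebraMap r =>
    rw [Algebra.algebraMap_eq_smul_one, map_smul, map_one_eq_zero_of_leibniz hD, smul_zero]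
    exact zero_mem _
  | add x y _ _ hx hy => rw [map_add]; exact add_mem hx hy
  | mul x y hx' hy' hx hy => rw [hD]; exact add_mem (mul_mem hx hy') (mul_mem hx' hy)

end Leibniz

theorem exists_finiteDimensional_invariant_subalgebra_mem {K A : Type*} [Field K] [Ring A]
    [Algebra K A] (hKC : ∀ s : Finset A, FiniteDimensional K (Algebra.adjoin K (s : Set A)))
    {D : A →ₗ[K] A} (hD : ∀ a b, D (a * b) = D a * b + a * D b) {a : A}
    (ha : FiniteDimensional K (span K (Set.range fun i : ℕ => (D ^ i) a))) :
    ∃ B : Subalgebra K A, FiniteDimensional K B ∧ a ∈ B ∧ ∀ x ∈ B, D x ∈ B := by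
  obtain ⟨s, hs⟩ := (fg_iff_finiteDimensional _).2 ha
  have hspan : span K (Set.range fun i : ℕ => (D ^ i) a) ≤
      Subalgebra.toSubmodule (Algebra.adjoin K (s : Set A)) :=
    hs ▸ Algebra.span_le_adjoin K _
  refine ⟨Algebra.adjoin K s, hKC s, hspan (subset_span ⟨0, rfl⟩), fun x hx => ?_⟩
  refine map_mem_adjoin_of_leibniz hD (fun y hy => hspan ?_) hx
  exact Module.End.apply_mem_span_range_pow_apply D a (hs ▸ subset_span hy)

/-- Let K be a field of characteristic zero and A a unital K-algebra such that
every K-subalgebra of A generated by finitely many elements is finite dimensional over K.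
If D is a locally finite K-derivation of A, then the image D(A) of D contains no nonzero
idempotent of A. -/
theorem lfed_derivation_no_idempotent
    (K : Type*) [Field K] [CharZero K]
    (A : Type*) [Ring A] [Algebra K A]
    (hKC : ∀ s : Finset A, FiniteDimensional K (Algebra.adjoin K (s : Set A)))
    (D : A →ₗ[K] A)
    (hDer : ∀ a b : A, D (a * b) = D a * b + a * D b)
    (hLF : ∀ a : A,
      FiniteDimensional K (Submodule.span K (Set.range fun i : ℕ => (D ^ i) a)))
    (e : A) (he : e * e = e) (heIm : e ∈ LinearMap.range D) :
    e = 0 := by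
  obtain ⟨a, rfl⟩ := heIm
  obtain ⟨B, _, haB, hDB⟩ := exists_finiteDimensional_invariant_subalgebra_mem hKC hDer (hLF a)
  let DB : Module.End K B :=
    D.restrict (p := Subalgebra.toSubmodule B) (q := Subalgebra.toSubmodule B) hDB
  have hDB_leibniz : ∀ x y, DB (x * y) = DB x * y + x * DB y := fun x y => Subtype.ext (hDer x y)
  have hidem : IsIdempotentElem (DB ⟨a, haB⟩) := Subtype.ext he
  have hzero : DB ⟨a, haB⟩ = 0 :=
    hidem.eq_zero_of_trace_mulLeft_eq_zero (trace_mulLeft_map_eq_zero_of_leibniz hDB_leibniz _)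
  exact congr_arg Subtype.val hzero
end

section
/- Let K be a field of characteristic zero and A a unital K-algebra such that every K-subalgebra of A generated by finitely many elements is finite dimensional over K. If φ is a locally finite K-algebra automorphism of A, then the image of the map I − φ (where I is the identity map of A) contains no nonzero idempotent of A, i.e., for every e ∈ A with e^2 = e and e ∈ (I − φ)(A), one has e = 0. -/
/-!
The orbit `{φⁱ x}` spans a finite-dimensional space, so it generates a finite-dimensional
subalgebra `B` that `φ` maps injectively, hence bijectively, into itself. On `B`, left
multiplication by `x - φ x` has trace `tr L_x - tr (φ L_x φ⁻¹) = 0`. For an idempotent `e` the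
operator `L_e` is a projection, whose trace is its rank; in characteristic zero a vanishing
trace forces `L_e = 0`, i.e. `e = L_e 1 = 0`.
-/

open Function LinearMap

section FiniteDimensional

variable {K B : Type*} [Field K] [Ring B] [Algebra K B] [FiniteDimensional K B]

theorem trace_lmul_sub_apply_eq_zero (ψ : B →ₐ[K] B) (hψ : Injective ψ) (x : B) :
    trace K B (Algebra.lmul K B (x - ψ x)) = 0 := by
  let ψₗ := LinearEquiv.ofInjectiveEndo ψ.toLinearMap hψ
  have hconj : Algebra.lmul K B (ψ x) = ψₗ.conj (Algebra.lmul K B x) := by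
    ext b
    have hb : ψ (ψₗ.symm b) = b := ψₗ.apply_symm_apply b
    change ψ x * b = ψ (x * ψₗ.symm b)
    rw [map_mul, hb]
  rw [map_sub, map_sub, hconj, trace_conj', sub_self]

theorem IsIdempotentElem.eq_zero_of_trace_lmul_eq_zero [CharZero K] {e : B}
    (he : IsIdempotentElem e) (htr : trace K B (Algebra.lmul K B e) = 0) : e = 0 :=
  Algebra.lmul_injective (R := K) <| by
    simpa using (he.map (Algebra.lmul K B)).eq_zero_of_trace_eq_zero htr

theorem IsIdempotentElem.eq_zero_of_eq_sub_apply [CharZero K] {e : B} (he : IsIdempotentElem e)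
    (ψ : B →ₐ[K] B) (hψ : Injective ψ) {x : B} (hx : e = x - ψ x) : e = 0 :=
  he.eq_zero_of_trace_lmul_eq_zero (hx ▸ trace_lmul_sub_apply_eq_zero ψ hψ x)

end FiniteDimensional

section Orbit

variable {K A : Type*} [Field K] [Ring A] [Algebra K A]

theorem Algebra.finiteDimensional_adjoin_of_finiteDimensional_span
    (hKC : ∀ s : Finset A, FiniteDimensional K (Algebra.adjoin K (s : Set A)))
    (s : Set A) [hs : FiniteDimensional K (Submodule.span K s)] :
    FiniteDimensional K (Algebra.adjoin K s) := by
  obtain ⟨t, ht⟩ := (Submodule.fg_iff_finiteDimensional _).2 hs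
  rw [← Algebra.adjoin_span, ← ht, Algebra.adjoin_span]
  exact hKC t

theorem Algebra.mapsTo_adjoin {f : A →ₐ[K] A} {s : Set A} (hs : Set.MapsTo f s s) :
    Set.MapsTo f (Algebra.adjoin K s) (Algebra.adjoin K s) := fun a ha =>
  (AlgHom.map_adjoin f s ▸ Algebra.adjoin_mono hs.image_subset) ⟨a, ha, rfl⟩

theorem AlgEquiv.mapsTo_range_pow_apply (φ : A ≃ₐ[K] A) (x : A) :
    Set.MapsTo φ (Set.range fun i : ℕ => (φ ^ i) x) (Set.range fun i : ℕ => (φ ^ i) x) := by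
  rintro _ ⟨i, rfl⟩
  exact ⟨i + 1, congr($(pow_succ' φ i) x)⟩

end Orbit

/-- If φ is a locally finite K-algebra automorphism of A (with A satisfying the
condition (KC)), then the image of I − φ contains no nonzero idempotent of A. -/
theorem lfed_automorphism_no_idempotent
    (K : Type*) [Field K] [CharZero K]
    (A : Type*) [Ring A] [Algebra K A]
    (hKC : ∀ s : Finset A, FiniteDimensional K (Algebra.adjoin K (s : Set A)))
    (φ : A ≃ₐ[K] A)
    (hLF : ∀ a : A,
      FiniteDimensional K (Submodule.span K (Set.range fun i : ℕ => (φ ^ i) a)))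
    (e : A) (he : e * e = e) (heIm : ∃ x : A, e = x - φ x) :
    e = 0 := by
  obtain ⟨x, rfl⟩ := heIm
  set orbit := Set.range fun i : ℕ => (φ ^ i) x
  set B := Algebra.adjoin K orbit
  have : FiniteDimensional K (Submodule.span K orbit) := hLF x
  have : FiniteDimensional K B :=
    Algebra.finiteDimensional_adjoin_of_finiteDimensional_span hKC orbit
  have hφB : Set.MapsTo φ B B :=
    Algebra.mapsTo_adjoin (f := (φ : A →ₐ[K] A)) (φ.mapsTo_range_pow_apply x)
  let ψ : B →ₐ[K] B := ((φ : A →ₐ[K] A).comp B.val).codRestrict B fun b => hφB b.2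
  have hψ : Injective ψ := fun a b hab => Subtype.ext (φ.injective congr(($hab : A)))
  have hxB : x ∈ B := Algebra.subset_adjoin ⟨0, rfl⟩
  have heB : x - φ x ∈ B := sub_mem hxB (hφB hxB)
  have h : (⟨x - φ x, heB⟩ : B) = 0 :=
    IsIdempotentElem.eq_zero_of_eq_sub_apply (Subtype.ext he) ψ hψ (x := ⟨x, hxB⟩) rfl
  exact congrArg Subtype.val h
end

section
/- Let K be a field of characteristic zero and A a unital K-algebra such that every K-subalgebra of A generated by finitely many elements is finite dimensional over K. Let φ be a K-algebra endomorphism of A such that the map δ = I − φ is locally nilpotent. Then for every K-subspace V of A, the image δ(V) is a Mathieu subspace of A. -/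
/-!
It suffices to show that `a` is nilpotent whenever all `a ^ m` with `m ≥ 1` lie in `δ(V)`.
As `K[a]` is finite dimensional, hence Artinian, `a ^ n = a ^ (n + 1) * y` for some `n ≥ 1`
and `y ∈ K[a]`; then `e = a ^ n * y ^ n` is an idempotent with `a ^ n * e = a ^ n`, and `e`
lies in the span of the positive powers of `a`, hence in the range of `δ`.

An idempotent `e = u - φ u` vanishes: `u` lies in the finite-dimensional subalgebra `B`
generated by its `δ`-orbit, which is `φ`-stable because `φ = 1 - δ`. Since `δ` is locally
nilpotent, `φ` is injective, hence an automorphism of `B`; so left multiplication by `φ u` is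
conjugate to left multiplication by `u`, left multiplication by `e` has trace zero, and an
idempotent operator of trace zero vanishes in characteristic zero.
-/

/-- A K-subspace `V` of `A` is a Mathieu subspace of `A` if for all `a b c : A` such that
`a ^ m ∈ V` for all `m ≥ 1`, there exists `N ≥ 1` such that `b * a ^ m * c ∈ V` for all
`m ≥ N`. -/
def IsMathieuSubspace {K : Type*} [Field K] {A : Type*} [Ring A] [Algebra K A]
    (V : Submodule K A) : Prop :=
  ∀ a b c : A, (∀ m : ℕ, 1 ≤ m → a ^ m ∈ V) →
    ∃ N : ℕ, 1 ≤ N ∧ ∀ m : ℕ, N ≤ m → b * a ^ m * c ∈ V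

def Module.End.IsLocallyNilpotent {R M : Type*} [Semiring R] [AddCommMonoid M] [Module R M]
    (f : Module.End R M) : Prop :=
  ∀ x, ∃ m : ℕ, (f ^ m) x = 0

theorem Module.End.IsLocallyNilpotent.injective_one_sub {R M : Type*} [Ring R] [AddCommGroup M]
    [Module R M] {f : Module.End R M} (hf : f.IsLocallyNilpotent) :
    Function.Injective ⇑(1 - f) := by
  refine (injective_iff_map_eq_zero (1 - f)).mpr fun x hx => ?_
  obtain ⟨m, hm⟩ := hf x
  have hfix : f x = x := by
    rwa [LinearMap.sub_apply, Module.End.one_apply, sub_eq_zero, eq_comm] at hx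
  rwa [Module.End.pow_apply, Function.iterate_fixed hfix] at hm

theorem Commute.isIdempotentElem_pow_mul_pow {A : Type*} [Ring A] {a y : A} (hc : Commute a y)
    {n : ℕ} (h : a ^ (n + 1) * y = a ^ n) :
    IsIdempotentElem (a ^ n * y ^ n) ∧ a ^ n * (a ^ n * y ^ n) = a ^ n := by
  have hpow : ∀ k, a ^ (n + k) * y ^ k = a ^ n := by
    intro k
    induction k with
    | zero => simp
    | succ k ih =>
      rw [show n + (k + 1) = k + (n + 1) by omega, pow_add, pow_succ' y, mul_assoc,
        ← mul_assoc (a ^ (n + 1)), h, ← mul_assoc, ← pow_add, add_comm k, ih]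
  refine ⟨?_, by rw [← mul_assoc, ← pow_add, hpow]⟩
  calc a ^ n * y ^ n * (a ^ n * y ^ n) = a ^ n * (y ^ n * a ^ n) * y ^ n := by
        simp only [mul_assoc]
    _ = a ^ (n + n) * y ^ n * y ^ n := by
        rw [← (hc.pow_pow n n).eq, pow_add]; simp only [mul_assoc]
    _ = a ^ n * y ^ n := by rw [hpow]

section Algebra

variable {K : Type*} [Field K] {A : Type*} [Ring A] [Algebra K A]

open scoped IsMulCommutative in
theorem exists_pow_succ_mul_eq_pow (a : A) [FiniteDimensional K (Algebra.adjoin K {a})] :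
    ∃ n, 1 ≤ n ∧ ∃ y ∈ Algebra.adjoin K {a}, a ^ (n + 1) * y = a ^ n := by
  let B := Algebra.adjoin K {a}
  have := IsArtinianRing.of_finite K B
  obtain ⟨n, y, hy⟩ :=
    IsArtinian.exists_pow_succ_smul_dvd (⟨a, Algebra.self_mem_adjoin_singleton K a⟩ : B) (1 : B)
  refine ⟨n + 1, Nat.le_add_left 1 n, y, y.2, ?_⟩
  have := congrArg (fun x : B => a * (x : A)) hy
  simpa [B, pow_succ' a (n + 1), pow_succ' a n, mul_assoc] using this

theorem mul_mem_of_forall_pow_mem {W : Submodule K A} {a b : A}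
    (hW : ∀ m : ℕ, 1 ≤ m → a ^ m ∈ W) (hb : b ∈ Algebra.adjoin K {a}) : a * b ∈ W := by
  rw [← Subalgebra.mem_toSubmodule, Algebra.adjoin_eq_span] at hb
  induction hb using Submodule.span_induction with
  | mem x hx =>
    obtain ⟨k, rfl⟩ := Submonoid.mem_closure_singleton.mp hx
    exact pow_succ' a k ▸ hW (k + 1) (Nat.le_add_left 1 k)
  | zero => simp
  | add x y _ _ hx hy => rw [mul_add]; exact add_mem hx hy
  | smul c x _ hx => rw [mul_smul_comm]; exact W.smul_mem c hx

theorem trace_lmul_algEquiv_apply {B : Type*} [Ring B] [Algebra K B] [FiniteDimensional K B]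
    (σ : B ≃ₐ[K] B) (u : B) :
    LinearMap.trace K B (Algebra.lmul K B (σ u)) = LinearMap.trace K B (Algebra.lmul K B u) := by
  rw [← LinearMap.trace_conj' (Algebra.lmul K B u) σ.toLinearEquiv]
  congr 1
  ext y
  simp [LinearEquiv.conj_apply]

theorem eq_zero_of_isIdempotentElem_sub_algEquiv_apply [CharZero K] {B : Type*} [Ring B]
    [Algebra K B] [FiniteDimensional K B] (σ : B ≃ₐ[K] B) {u : B}
    (he : IsIdempotentElem (u - σ u)) : u - σ u = 0 := by
  have htr : LinearMap.trace K B (Algebra.lmul K B (u - σ u)) = 0 := by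
    rw [map_sub, map_sub, trace_lmul_algEquiv_apply, sub_self]
  simpa using
    LinearMap.congr_fun (LinearMap.IsIdempotentElem.eq_zero_of_trace_eq_zero (he.map _) htr) 1

theorem eq_zero_of_isIdempotentElem_sub_apply_of_mem [CharZero K] (φ : A →ₐ[K] A)
    (hφ : Function.Injective φ) (B : Subalgebra K A) [FiniteDimensional K B] (hB : B.map φ ≤ B)
    {u : A} (hu : u ∈ B) (he : IsIdempotentElem (u - φ u)) : u - φ u = 0 := by
  let ψ : B →ₐ[K] B := (φ.comp B.val).codRestrict B fun x => hB ⟨x, x.2, rfl⟩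
  have hψ : Function.Injective ψ := fun x y h => Subtype.ext (hφ (congrArg Subtype.val h))
  let σ : B ≃ₐ[K] B :=
    AlgEquiv.ofBijective ψ ⟨hψ, LinearMap.injective_iff_surjective (f := ψ.toLinearMap).mp hψ⟩
  exact congrArg Subtype.val
    (eq_zero_of_isIdempotentElem_sub_algEquiv_apply σ (u := ⟨u, hu⟩) (Subtype.ext he))

theorem exists_finiteDimensional_subalgebra_map_le
    (hKC : ∀ s : Finset A, FiniteDimensional K (Algebra.adjoin K (s : Set A)))
    (φ : A →ₐ[K] A) {u : A} {m : ℕ}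
    (hm : ((LinearMap.id - φ.toLinearMap : Module.End K A) ^ m) u = 0) :
    ∃ B : Subalgebra K A, FiniteDimensional K B ∧ u ∈ B ∧ B.map φ ≤ B := by
  set δ : Module.End K A := LinearMap.id - φ.toLinearMap
  have hS : (Set.range fun k => (δ ^ k) u).Finite := by
    refine ((Set.finite_Iic m).image fun k => (δ ^ k) u).subset ?_
    rintro _ ⟨k, rfl⟩
    rcases le_total k m with hk | hk
    · exact ⟨k, hk, rfl⟩
    · refine ⟨m, Set.mem_Iic.mpr le_rfl, ?_⟩
      dsimp only
      rw [hm, ← Nat.sub_add_cancel hk, pow_add, Module.End.mul_apply, hm, map_zero]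
  refine ⟨Algebra.adjoin K (Set.range fun k => (δ ^ k) u), hS.coe_toFinset ▸ hKC hS.toFinset,
    Algebra.subset_adjoin ⟨0, rfl⟩, ?_⟩
  rw [AlgHom.map_adjoin, Algebra.adjoin_le_iff]
  rintro _ ⟨_, ⟨k, rfl⟩, rfl⟩
  have hφ : φ ((δ ^ k) u) = (δ ^ k) u - (δ ^ (k + 1)) u := by
    rw [pow_succ', Module.End.mul_apply]
    simp [δ]
  exact hφ ▸ sub_mem (Algebra.subset_adjoin ⟨k, rfl⟩) (Algebra.subset_adjoin ⟨k + 1, rfl⟩)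

theorem eq_zero_of_isIdempotentElem_of_mem_range [CharZero K]
    (hKC : ∀ s : Finset A, FiniteDimensional K (Algebra.adjoin K (s : Set A)))
    (φ : A →ₐ[K] A) (hLN : (LinearMap.id - φ.toLinearMap : Module.End K A).IsLocallyNilpotent)
    {e : A} (he : IsIdempotentElem e)
    (hmem : e ∈ LinearMap.range (LinearMap.id - φ.toLinearMap : Module.End K A)) : e = 0 := by
  obtain ⟨u, rfl⟩ := hmem
  obtain ⟨m, hm⟩ := hLN u
  obtain ⟨B, hBfin, huB, hBφ⟩ := exists_finiteDimensional_subalgebra_map_le hKC φ hm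
  have hφ : Function.Injective φ := by
    have h := hLN.injective_one_sub
    rwa [Module.End.one_eq_id, sub_sub_cancel] at h
  exact eq_zero_of_isIdempotentElem_sub_apply_of_mem φ hφ B hBφ huB he

end Algebra

/-- Let φ be a K-algebra endomorphism of A (with A satisfying (KC)) such that
δ = I − φ is locally nilpotent. Then for every K-subspace V of A, δ(V) is a Mathieu
subspace of A. -/
theorem lned_E_derivation
    (K : Type*) [Field K] [CharZero K]
    (A : Type*) [Ring A] [Algebra K A]
    (hKC : ∀ s : Finset A, FiniteDimensional K (Algebra.adjoin K (s : Set A)))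
    (φ : A →ₐ[K] A)
    (hLN : ∀ a : A, ∃ m : ℕ, 1 ≤ m ∧
      ((LinearMap.id - φ.toLinearMap : A →ₗ[K] A) ^ m) a = 0)
    (V : Submodule K A) :
    IsMathieuSubspace (Submodule.map (LinearMap.id - φ.toLinearMap : A →ₗ[K] A) V) := by
  intro a b c ha
  have := hKC {a}
  rw [Finset.coe_singleton] at this
  obtain ⟨n, hn, y, hy, hay⟩ := exists_pow_succ_mul_eq_pow (K := K) a
  obtain ⟨he, hane⟩ := (Algebra.commute_of_mem_adjoin_self hy).isIdempotentElem_pow_mul_pow hay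
  have hmem : a ^ n * y ^ n ∈ Submodule.map (LinearMap.id - φ.toLinearMap : A →ₗ[K] A) V := by
    rw [← Nat.sub_add_cancel hn, pow_succ', mul_assoc]
    exact mul_mem_of_forall_pow_mem ha
      (mul_mem (pow_mem (Algebra.self_mem_adjoin_singleton K a) _) (pow_mem hy _))
  have he0 : a ^ n * y ^ n = 0 :=
    eq_zero_of_isIdempotentElem_of_mem_range hKC φ (fun x => (hLN x).imp fun _ => And.right) he
      (LinearMap.map_le_range hmem)
  have han : a ^ n = 0 := by rw [← hane, he0, mul_zero]
  exact ⟨n, hn, fun m hm => by simp [pow_eq_zero_of_le hm han]⟩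
end

section
/- Let K be a field of characteristic zero and A a unital K-algebra such that every K-subalgebra of A generated by finitely many elements is finite dimensional over K. If D is a locally finite K-derivation of A, then the image D(A) is a Mathieu subspace of A. -/
open Polynomial

theorem IsIdempotentElem.eq_zero_of_mem_range_of_leibniz {K : Type*} [Field K] [CharZero K]
    {B : Type*} [Ring B] [Algebra K B] [FiniteDimensional K B] {δ : B →ₗ[K] B}
    (hδ : ∀ a b : B, δ (a * b) = δ a * b + a * δ b) {e : B} (he : IsIdempotentElem e)
    (heδ : e ∈ LinearMap.range δ) : e = 0 := by
  obtain ⟨u, rfl⟩ := heδ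
  have hcomm : LinearMap.mulLeft K (δ u) =
      δ * LinearMap.mulLeft K u - LinearMap.mulLeft K u * δ := by
    ext x
    simp [hδ]
  have hL : IsIdempotentElem (LinearMap.mulLeft K (δ u)) :=
    LinearMap.ext fun x => by simp [← mul_assoc, he.eq]
  have htr : LinearMap.trace K B (LinearMap.mulLeft K (δ u)) = 0 := by
    rw [hcomm, map_sub, LinearMap.trace_mul_comm, sub_self]
  simpa using LinearMap.congr_fun (LinearMap.IsIdempotentElem.eq_zero_of_trace_eq_zero hL htr) 1

section Leibniz

variable {K : Type*} [Field K] {A : Type*} [Ring A] [Algebra K A]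
  {D : A →ₗ[K] A} (hDer : ∀ a b : A, D (a * b) = D a * b + a * D b)
include hDer

theorem map_one_eq_zero_of_leibniz_s4 : D 1 = 0 := by
  simpa using hDer 1 1

theorem adjoin_mapsTo_of_leibniz {s : Set A} (hs : ∀ x ∈ s, D x ∈ Algebra.adjoin K s) :
    ∀ x ∈ Algebra.adjoin K s, D x ∈ Algebra.adjoin K s := by
  intro x hx
  induction hx using Algebra.adjoin_induction with
  | mem y hy => exact hs y hy
  | algebraMap r =>
    rw [Algebra.algebraMap_eq_smul_one, map_smul, map_one_eq_zero_of_leibniz_s4 hDer, smul_zero]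
    exact Subalgebra.zero_mem _
  | add x y _ _ hx hy => rw [map_add]; exact add_mem hx hy
  | mul x y hx' hy' hx hy =>
    rw [hDer]
    exact add_mem (mul_mem hx hy') (mul_mem hx' hy)

theorem exists_finiteDimensional_subalgebra_mapsTo_of_leibniz
    (hKC : ∀ s : Finset A, FiniteDimensional K (Algebra.adjoin K (s : Set A)))
    (hLF : ∀ a : A,
      FiniteDimensional K (Submodule.span K (Set.range fun i : ℕ => (D ^ i) a)))
    (x : A) :
    ∃ C : Subalgebra K A, FiniteDimensional K C ∧ x ∈ C ∧ ∀ y ∈ C, D y ∈ C := by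
  set M := Submodule.span K (Set.range fun i : ℕ => (D ^ i) x)
  have hMD : M ≤ M.comap D := Submodule.span_le.mpr <| by
    rintro _ ⟨i, rfl⟩
    exact Submodule.subset_span ⟨i + 1, by simp only [pow_succ', Module.End.mul_apply]⟩
  obtain ⟨t, ht⟩ := (Submodule.fg_top M).mp (Module.finite_def.mp (hLF x))
  have hMC : M ≤ Subalgebra.toSubmodule (Algebra.adjoin K (t : Set A)) :=
    ht ▸ Algebra.span_le_adjoin K _
  refine ⟨Algebra.adjoin K (t : Set A), hKC t, hMC (Submodule.subset_span ⟨0, rfl⟩),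
    adjoin_mapsTo_of_leibniz hDer fun y hy => hMC (hMD ?_)⟩
  exact ht ▸ Submodule.subset_span hy

theorem IsIdempotentElem.eq_zero_of_mem_range_of_locallyFinite [CharZero K]
    (hKC : ∀ s : Finset A, FiniteDimensional K (Algebra.adjoin K (s : Set A)))
    (hLF : ∀ a : A,
      FiniteDimensional K (Submodule.span K (Set.range fun i : ℕ => (D ^ i) a)))
    {e : A} (he : IsIdempotentElem e) (heD : e ∈ LinearMap.range D) : e = 0 := by
  obtain ⟨u, rfl⟩ := heD
  obtain ⟨C, _, huC, hDC⟩ :=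
    exists_finiteDimensional_subalgebra_mapsTo_of_leibniz hDer hKC hLF u
  let δ : C →ₗ[K] C :=
    { toFun x := ⟨D x, hDC x x.2⟩
      map_add' x y := Subtype.ext (map_add D (x : A) y)
      map_smul' r x := Subtype.ext (map_smul D r (x : A)) }
  have hδ : ∀ x y : C, δ (x * y) = δ x * y + x * δ y := fun x y => Subtype.ext (hDer x y)
  have he' : IsIdempotentElem (⟨D u, hDC u huC⟩ : C) := Subtype.ext he
  exact congrArg Subtype.val (he'.eq_zero_of_mem_range_of_leibniz hδ ⟨⟨u, huC⟩, rfl⟩)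

end Leibniz

theorem aeval_X_mul_mem_of_forall_pow_mem {K : Type*} [Field K] {A : Type*} [Ring A]
    [Algebra K A] {V : Submodule K A} {a : A} (ha : ∀ m : ℕ, 1 ≤ m → a ^ m ∈ V) (f : K[X]) :
    aeval a (X * f) ∈ V := by
  induction f using Polynomial.induction_on' with
  | add f g hf hg => rw [mul_add, map_add]; exact add_mem hf hg
  | monomial n c =>
    rw [← C_mul_X_pow_eq_monomial, mul_left_comm, ← pow_succ', map_mul, aeval_C, aeval_X_pow,
      ← Algebra.smul_def]
    exact V.smul_mem c (ha _ n.succ_pos)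

theorem IsIntegral.isNilpotent_of_forall_isIdempotentElem {K : Type*} [Field K] {A : Type*}
    [Ring A] [Algebra K A] {a : A} (ha : IsIntegral K a)
    (h : ∀ f : K[X], IsIdempotentElem (aeval a (X * f)) → aeval a (X * f) = 0) :
    IsNilpotent a := by
  set p := minpoly K a
  obtain ⟨q, hpq, hXq⟩ := exists_eq_pow_rootMultiplicity_mul_and_not_dvd p (minpoly.ne_zero ha) 0
  simp only [map_zero, sub_zero] at hpq hXq
  set k := p.rootMultiplicity 0
  obtain ⟨f, g, hfg⟩ : IsCoprime (X ^ (k + 1)) q :=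
    (irreducible_X.coprime_iff_not_dvd.mpr hXq).pow_left
  have hp0 : aeval a p = 0 := minpoly.aeval K a
  have hidem : IsIdempotentElem (aeval a (X * (X ^ k * f))) := by
    have hpoly : X * (X ^ k * f) * (X * (X ^ k * f)) - X * (X ^ k * f) = -(X * f * g) * p := by
      rw [hpq]
      linear_combination ((X : K[X]) * (X ^ k * f)) * hfg
    rw [IsIdempotentElem, ← map_mul, ← sub_eq_zero, ← map_sub, hpoly, map_mul, hp0, mul_zero]
  have hdvd : p ∣ X * (X ^ k * f) := minpoly.dvd K a (h _ hidem)
  have hq : IsUnit q := isUnit_of_dvd_one <| by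
    rw [← hfg]
    exact dvd_add ((Dvd.intro_left _ hpq.symm).trans (hdvd.trans (dvd_of_eq (by ring))))
      (dvd_mul_left q g)
  refine ⟨k, ?_⟩
  have hk : aeval a ((X : K[X]) ^ k) * aeval a q = 0 := by rw [← map_mul, ← hpq, hp0]
  simpa using (hq.map (aeval a)).mul_left_eq_zero.mp hk

/-- If D is a locally finite K-derivation of A (with A satisfying (KC)),
then the image D(A) is a Mathieu subspace of A. -/
theorem lfed_derivation
    (K : Type*) [Field K] [CharZero K]
    (A : Type*) [Ring A] [Algebra K A]
    (hKC : ∀ s : Finset A, FiniteDimensional K (Algebra.adjoin K (s : Set A)))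
    (D : A →ₗ[K] A)
    (hDer : ∀ a b : A, D (a * b) = D a * b + a * D b)
    (hLF : ∀ a : A,
      FiniteDimensional K (Submodule.span K (Set.range fun i : ℕ => (D ^ i) a))) :
    IsMathieuSubspace (LinearMap.range D) := by
  intro a b c ha
  have hfd : FiniteDimensional K (Algebra.adjoin K {a}) := by
    rw [← Finset.coe_singleton]; exact hKC {a}
  have hint : IsIntegral K a :=
    IsIntegral.of_mem_of_fg _ ((Submodule.fg_top _).mp (Module.finite_def.mp hfd)) a
      (Algebra.self_mem_adjoin_singleton K a)
  obtain ⟨n, hn⟩ := hint.isNilpotent_of_forall_isIdempotentElem fun f hf =>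
    hf.eq_zero_of_mem_range_of_locallyFinite hDer hKC hLF
      (aeval_X_mul_mem_of_forall_pow_mem ha f)
  refine ⟨n + 1, Nat.le_add_left 1 n, fun m hm => ?_⟩
  rw [pow_eq_zero_of_le (by omega) hn, mul_zero, zero_mul]
  exact zero_mem _
end

section
/- Let K be a field of characteristic zero and A a unital K-algebra such that every K-subalgebra of A generated by finitely many elements is finite dimensional over K. If φ is a locally finite K-algebra automorphism of A, then the image of I − φ is a Mathieu subspace of A. -/
/-!
Suppose all positive powers of `a` lie in the image of `I - φ`. They span a finite-dimensional
space, so finitely many preimages suffice, and together with `a` their `φ`-orbits generate a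
finite-dimensional `φ`-stable subalgebra `W`, on which `φ` is an automorphism. Left
multiplication then satisfies `L (φ u) = φ ∘ L u ∘ φ⁻¹`, so `tr L (a ^ m) = tr L (u - φ u) = 0`
for all `m ≥ 1`. In characteristic zero an endomorphism whose positive powers are all traceless
is nilpotent: over the algebraic closure the power sums `∑ dim E_μ • μ ^ m` over its generalized
eigenspaces vanish, which forces `E_μ = 0` for `μ ≠ 0`. Hence `a` is nilpotent and
`b * a ^ m * c = 0` for large `m`.
-/

open Module LinearMap

theorem Finset.eq_zero_of_sum_mul_pow_eq_zero {F : Type*} [Field F] {s : Finset F} {d : F → F}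
    (h : ∀ m, 0 < m → ∑ x ∈ s, d x * x ^ m = 0) {x : F} (hx : x ∈ s) (hx0 : x ≠ 0) :
    d x = 0 := by
  -- the characters `m ↦ x ^ m` of `(ℕ, +)` are linearly independent
  have hli : LinearIndependent F fun x : F => ⇑(powersHom F x) :=
    (linearIndependent_monoidHom (Multiplicative ℕ) F).comp _ (powersHom F).injective
  have hdx := linearIndependent_iff'.mp hli s (fun x => d x * x) (by
    ext n
    simpa [Finset.sum_apply, mul_assoc, ← pow_succ'] using h (n.toAdd + 1) n.toAdd.succ_pos) x hx
  exact (mul_eq_zero.mp hdx).resolve_right hx0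

section TracePowers

variable {K V : Type*} [Field K] [AddCommGroup V] [Module K V] [FiniteDimensional K V]

theorem LinearMap.trace_pow_eq_of_isNilpotent_sub_algebraMap {f : End K V} {μ : K}
    (hf : IsNilpotent (f - algebraMap K (End K V) μ)) (m : ℕ) :
    trace K V (f ^ m) = finrank K V * μ ^ m := by
  induction m with
  | zero => simp
  | succ m ih =>
    rw [pow_succ, Module.End.mul_eq_comp, trace_comp_eq_mul_of_commute_of_isNilpotent μ
      ((Commute.refl f).pow_left m) hf, ih]
    ring

theorem Module.End.trace_pow_eq_sum_finrank_mul_pow [IsAlgClosed K] (f : End K V)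
    (hfin : {μ | f.maxGenEigenspace μ ≠ ⊥}.Finite) (m : ℕ) :
    trace K V (f ^ m) =
      ∑ μ ∈ hfin.toFinset, (finrank K (f.maxGenEigenspace μ) : K) * μ ^ m := by
  classical
  have hmaps (g : End K V) (hg : Commute f g) (μ : K) :=
    f.mapsTo_maxGenEigenspace_of_comm hg μ
  rw [trace_eq_sum_trace_restrict' (DirectSum.isInternal_submodule_of_iSupIndep_of_iSup_eq_top
    f.independent_maxGenEigenspace f.iSup_maxGenEigenspace_eq_top) hfin
    (hmaps _ ((Commute.refl f).pow_right m))]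
  refine Finset.sum_congr rfl fun μ _ => ?_
  rw [← pow_restrict m (hmaps f (Commute.refl f) μ)]
  apply trace_pow_eq_of_isNilpotent_sub_algebraMap
  exact f.isNilpotent_restrict_maxGenEigenspace_sub_algebraMap μ

theorem Module.End.isNilpotent_of_maxGenEigenspace_eq_bot [IsAlgClosed K] {f : End K V}
    (h : ∀ μ ≠ 0, f.maxGenEigenspace μ = ⊥) : IsNilpotent f := by
  have htop : f.maxGenEigenspace 0 = ⊤ := by
    rw [← f.iSup_maxGenEigenspace_eq_top]
    refine le_antisymm (le_iSup _ 0) (iSup_le fun μ => ?_)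
    rcases eq_or_ne μ 0 with rfl | hμ
    · rfl
    · simp [h μ hμ]
  refine ((charpoly_nilpotent_tfae f).out 0 2).mpr fun v => ?_
  obtain ⟨k, hk⟩ := (f.mem_maxGenEigenspace 0 v).mp (htop ▸ Submodule.mem_top)
  exact ⟨k, by simpa using hk⟩

theorem LinearMap.isNilpotent_of_trace_pow_eq_zero_of_isAlgClosed [IsAlgClosed K] [CharZero K]
    {f : End K V} (h : ∀ m, 0 < m → trace K V (f ^ m) = 0) : IsNilpotent f := by
  classical
  have hfin := WellFoundedGT.finite_ne_bot_of_iSupIndep f.independent_maxGenEigenspace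
  refine f.isNilpotent_of_maxGenEigenspace_eq_bot fun μ hμ => ?_
  by_cases hμs : μ ∈ hfin.toFinset
  · have hrank := Finset.eq_zero_of_sum_mul_pow_eq_zero
      (fun m hm => (f.trace_pow_eq_sum_finrank_mul_pow hfin m).symm.trans (h m hm)) hμs hμ
    exact Submodule.finrank_eq_zero.mp (by exact_mod_cast hrank)
  · simpa using hμs

theorem LinearMap.isNilpotent_of_trace_pow_eq_zero [CharZero K] {f : End K V}
    (h : ∀ m, 0 < m → trace K V (f ^ m) = 0) : IsNilpotent f := by
  have hinj : Function.Injective (End.baseChangeHom K (AlgebraicClosure K) V) :=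
    LinearMap.baseChangeHom_injective K V _
  rw [← IsNilpotent.map_iff hinj]
  refine isNilpotent_of_trace_pow_eq_zero_of_isAlgClosed fun m hm => ?_
  rw [← map_pow]
  exact (trace_baseChange (f ^ m) _).trans (by rw [h m hm, map_zero])

end TracePowers

section FiniteDimensionalAlgebra

variable {K W : Type*} [Field K] [Ring W] [Algebra K W] [FiniteDimensional K W]

theorem trace_lmul_sub_apply_eq_zero_s5 {σ : W →ₐ[K] W} (hσ : Function.Injective σ) (u : W) :
    trace K W (Algebra.lmul K W (u - σ u)) = 0 := by
  let e := LinearEquiv.ofInjectiveEndo σ.toLinearMap hσ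
  have hconj : Algebra.lmul K W (σ u) = e.conj (Algebra.lmul K W u) := by
    ext x
    obtain ⟨y, rfl⟩ := e.surjective x
    simp only [LinearEquiv.conj_apply, LinearEquiv.symm_apply_apply, coe_comp, Function.comp_apply,
      LinearEquiv.coe_coe, Algebra.coe_lmul_eq_mul, LinearMap.mul_apply']
    exact (map_mul σ u y).symm
  rw [map_sub, map_sub, hconj, trace_conj', sub_self]

theorem isNilpotent_of_forall_pow_eq_sub_apply [CharZero K] {σ : W →ₐ[K] W}
    (hσ : Function.Injective σ) {a : W} (h : ∀ m, 0 < m → ∃ u, u - σ u = a ^ m) :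
    IsNilpotent a := by
  rw [← IsNilpotent.map_iff (Algebra.lmul_injective (R := K))]
  refine isNilpotent_of_trace_pow_eq_zero fun m hm => ?_
  obtain ⟨u, hu⟩ := h m hm
  rw [← map_pow, ← hu, trace_lmul_sub_apply_eq_zero_s5 hσ]

end FiniteDimensionalAlgebra

theorem Submodule.FG.exists_finset_map_span_eq {R M N : Type*} [Semiring R] [AddCommMonoid M]
    [Module R M] [AddCommMonoid N] [Module R N] (f : M →ₗ[R] N) {U : Submodule R N} (hU : U.FG)
    (h : U ≤ range f) : ∃ s : Finset M, (span R (s : Set M)).map f = U := by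
  classical
  obtain ⟨t, rfl⟩ := hU
  have ht : (t : Set N) ⊆ f '' Set.univ := by
    rw [Set.image_univ]
    exact subset_span.trans h
  obtain ⟨s, -, hs⟩ := Finset.subset_set_image_iff.mp ht
  exact ⟨s, by rw [map_span, ← hs, Finset.coe_image]⟩

section LocallyFinite

variable {K A : Type*} [Field K] [Ring A] [Algebra K A]

theorem exists_finset_forall_pow_mem_map_span {f : A →ₗ[K] A} {a : A}
    [FiniteDimensional K (Algebra.adjoin K {a})] (h : ∀ m, 0 < m → a ^ m ∈ range f) :
    ∃ s : Finset A, ∀ m, 0 < m → a ^ m ∈ (Submodule.span K (s : Set A)).map f := by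
  set U := Submodule.span K (Set.range fun m : ℕ => a ^ (m + 1))
  have hU : U ≤ Subalgebra.toSubmodule (Algebra.adjoin K {a}) := by
    rw [Submodule.span_le]
    rintro _ ⟨m, rfl⟩
    exact pow_mem (Algebra.self_mem_adjoin_singleton K a) _
  have hUfg : U.FG := Module.Finite.iff_fg.mp (Submodule.finiteDimensional_of_le hU)
  obtain ⟨s, hs⟩ := hUfg.exists_finset_map_span_eq f (Submodule.span_le.mpr <| by
    rintro _ ⟨m, rfl⟩
    exact h (m + 1) m.succ_pos)
  refine ⟨s, fun m hm => hs ▸ Submodule.subset_span ⟨m - 1, ?_⟩⟩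
  simp only [Nat.sub_add_cancel hm]

theorem exists_finiteDimensional_subalgebra_forall_apply_mem
    (hKC : ∀ s : Finset A, FiniteDimensional K (Algebra.adjoin K (s : Set A)))
    {φ : A ≃ₐ[K] A}
    (hLF : ∀ a : A, FiniteDimensional K (Submodule.span K (Set.range fun i : ℕ => (φ ^ i) a)))
    (s : Finset A) :
    ∃ W : Subalgebra K A,
      FiniteDimensional K W ∧ (s : Set A) ⊆ W ∧ ∀ x ∈ W, φ x ∈ W := by
  set T := Submodule.span K (⋃ x ∈ s, Set.range fun i : ℕ => (φ ^ i) x)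
  have hT_fg : T.FG := by
    simp only [T, Submodule.span_iUnion₂]
    exact Submodule.fg_biSup s _ fun x _ => Module.Finite.iff_fg.mp (hLF x)
  have hT_stable : T ≤ T.comap φ.toLinearMap := by
    rw [Submodule.span_le]
    simp only [Set.iUnion_subset_iff]
    rintro x hx _ ⟨i, rfl⟩
    refine Submodule.subset_span (Set.mem_iUnion₂.mpr ⟨x, hx, i + 1, ?_⟩)
    show (φ ^ (i + 1)) x = φ ((φ ^ i) x)
    rw [pow_succ', AlgEquiv.mul_apply]
  obtain ⟨G, hG, hGT⟩ := Submodule.fg_def.mp hT_fg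
  refine ⟨Algebra.adjoin K T, ?_, ?_, fun x hx => ?_⟩
  · rw [← hGT, Algebra.adjoin_span, ← hG.coe_toFinset]
    exact hKC _
  · intro x hx
    refine Algebra.subset_adjoin (Submodule.subset_span (Set.mem_iUnion₂.mpr ⟨x, hx, 0, ?_⟩))
    simp
  · suffices Algebra.adjoin K T ≤ (Algebra.adjoin K T).comap (φ : A →ₐ[K] A) from this hx
    exact Algebra.adjoin_le fun y hy => Algebra.subset_adjoin (hT_stable hy)

theorem Subalgebra.isNilpotent_of_forall_pow_mem_map_sub {W : Subalgebra K A}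
    [FiniteDimensional K W] [CharZero K] {φ : A ≃ₐ[K] A} (hφW : ∀ x ∈ W, φ x ∈ W) {a : A}
    (ha : a ∈ W)
    (h : ∀ m, 0 < m → a ^ m ∈ (Subalgebra.toSubmodule W).map (LinearMap.id - φ.toLinearMap)) :
    IsNilpotent a := by
  let σ : W →ₐ[K] W := ((φ : A →ₐ[K] A).comp W.val).codRestrict W fun x => hφW x x.2
  have hσ : Function.Injective σ := fun x y hxy =>
    Subtype.ext (φ.injective (congrArg Subtype.val hxy))
  have hnil : IsNilpotent (⟨a, ha⟩ : W) :=
    isNilpotent_of_forall_pow_eq_sub_apply hσ fun m hm => by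
      obtain ⟨u, hu, hua⟩ := h m hm
      exact ⟨⟨u, hu⟩, Subtype.ext hua⟩
  exact hnil.map W.val

theorem isMathieuSubspace_of_isNilpotent {V : Submodule K A}
    (h : ∀ a : A, (∀ m, 0 < m → a ^ m ∈ V) → IsNilpotent a) : IsMathieuSubspace V := by
  intro a b c ha
  obtain ⟨n, hn⟩ := h a ha
  refine ⟨n + 1, n.succ_pos, fun m hm => ?_⟩
  rw [pow_eq_zero_of_le (by omega) hn, mul_zero, zero_mul]
  exact V.zero_mem

end LocallyFinite

/-- If φ is a locally finite K-algebra automorphism of A (with A satisfying (KC)),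
then the image of I − φ is a Mathieu subspace of A. -/
theorem lfed_automorphism
    (K : Type*) [Field K] [CharZero K]
    (A : Type*) [Ring A] [Algebra K A]
    (hKC : ∀ s : Finset A, FiniteDimensional K (Algebra.adjoin K (s : Set A)))
    (φ : A ≃ₐ[K] A)
    (hLF : ∀ a : A,
      FiniteDimensional K (Submodule.span K (Set.range fun i : ℕ => (φ ^ i) a))) :
    IsMathieuSubspace
      (LinearMap.range (LinearMap.id - φ.toLinearMap : A →ₗ[K] A)) := by
  classical
  refine isMathieuSubspace_of_isNilpotent fun a ha => ?_
  have : FiniteDimensional K (Algebra.adjoin K {a}) := by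
    have h := hKC {a}
    rwa [Finset.coe_singleton] at h
  obtain ⟨s, hs⟩ := exists_finset_forall_pow_mem_map_span ha
  obtain ⟨W, hWfd, hsW, hφW⟩ := exists_finiteDimensional_subalgebra_forall_apply_mem hKC hLF
    (insert a s)
  have hspan_le : Submodule.span K (s : Set A) ≤ Subalgebra.toSubmodule W :=
    Submodule.span_le.mpr ((Finset.coe_subset.mpr (Finset.subset_insert a s)).trans hsW)
  exact W.isNilpotent_of_forall_pow_mem_map_sub hφW (hsW (Finset.mem_insert_self a s))
    fun m hm => Submodule.map_mono hspan_le (hs m hm)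
end

section
/- Let K be a field of characteristic zero and A a unital K-algebra such that every K-subalgebra of A generated by finitely many elements is finite dimensional over K. Let φ be a locally finite surjective K-algebra endomorphism of A. Then the image of I − φ is a Mathieu subspace of A. -/
theorem LinearMap.sub_iterate_mem_range_id_sub {R M : Type*} [Ring R] [AddCommGroup M]
    [Module R M] (f : Module.End R M) (x : M) (n : ℕ) :
    x - f^[n] x ∈ LinearMap.range (LinearMap.id - f) :=
  ⟨∑ i ∈ Finset.range n, (f ^ i) x, by
    rw [← Module.End.one_eq_id, ← LinearMap.sum_apply, ← Module.End.mul_apply,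
      mul_neg_geom_sum, LinearMap.sub_apply, Module.End.one_apply, Module.End.pow_apply]⟩

section Idempotent

variable {K A : Type*} [Field K] [Ring A] [Algebra K A]

open Algebra

theorem exists_pow_add_mul_eq_pow (a : A) [FiniteDimensional K K[a]] :
    ∃ N, 1 ≤ N ∧ ∃ t ∈ K[a], a ^ (N + N) * t = a ^ N := by
  let L := LinearMap.mulLeft K (⟨a, self_mem_adjoin_singleton K a⟩ : K[a])
  obtain ⟨n, hn⟩ := IsArtinian.monotone_stabilizes L.iterateRange
  have hrange : LinearMap.range (L ^ (n + 1)) = LinearMap.range (L ^ (n + 1 + (n + 1))) :=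
    (hn _ (by omega)).symm.trans (hn _ (by omega))
  obtain ⟨t, ht⟩ := hrange ▸ LinearMap.mem_range_self (L ^ (n + 1)) 1
  refine ⟨n + 1, by omega, t, t.2, ?_⟩
  simpa [L, LinearMap.pow_mulLeft] using congrArg Subtype.val ht

theorem pow_mul_mem_span_range_pow_succ {a t : A} {N : ℕ} (hN : 1 ≤ N) (ht : t ∈ K[a]) :
    a ^ N * t ∈ Submodule.span K (Set.range fun m : ℕ => a ^ (m + 1)) := by
  rw [← Subalgebra.mem_toSubmodule, adjoin_eq_span, ← Submonoid.powers_eq_closure] at ht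
  induction ht using Submodule.span_induction with
  | mem x hx =>
    obtain ⟨k, rfl⟩ := hx
    exact Submodule.subset_span ⟨N - 1 + k, by dsimp only; rw [← pow_add]; congr 1; omega⟩
  | zero => simp
  | add x y _ _ hx hy => rw [mul_add]; exact add_mem hx hy
  | smul r x _ hx => rw [mul_smul_comm]; exact Submodule.smul_mem _ r hx

theorem exists_isIdempotentElem_mem_span_and_pow_mul_eq (a : A) [FiniteDimensional K K[a]] :
    ∃ ε ∈ Submodule.span K (Set.range fun m : ℕ => a ^ (m + 1)),
      IsIdempotentElem ε ∧ ∃ N, ∀ m ≥ N, a ^ m * ε = a ^ m := by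
  obtain ⟨N, hN, t, ht, hat⟩ := exists_pow_add_mul_eq_pow (K := K) a
  have hcomm : t * a ^ N = a ^ N * t := ((commute_of_mem_adjoin_self ht).pow_left N).eq.symm
  refine ⟨a ^ N * t, pow_mul_mem_span_range_pow_succ hN ht, ?_, N, fun m hm => ?_⟩
  · calc a ^ N * t * (a ^ N * t) = a ^ (N + N) * t * t := by
          rw [mul_assoc, ← mul_assoc t, hcomm, pow_add]; simp only [mul_assoc]
      _ = a ^ N * t := by rw [hat]
  · rw [show m = m - N + N by omega, pow_add, mul_assoc, ← mul_assoc (a ^ N), ← pow_add, hat]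

end Idempotent

section FiniteDimensional

variable {K B : Type*} [Field K] [CharZero K] [Ring B] [Algebra K B] [FiniteDimensional K B]

theorem AlgHom.sub_apply_eq_zero_of_isIdempotentElem_of_injective (σ : B →ₐ[K] B)
    (hσ : Function.Injective σ) {x : B} (hx : IsIdempotentElem (x - σ x)) : x - σ x = 0 := by
  let e := LinearEquiv.ofInjectiveEndo σ.toLinearMap hσ
  have hconj : Algebra.lmul K B (σ x) = e.conj (Algebra.lmul K B x) := by
    ext w
    change σ x * w = σ (x * e.symm w)
    rw [map_mul]
    exact congrArg _ (e.apply_symm_apply w).symm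
  have htrace : LinearMap.trace K B (Algebra.lmul K B (x - σ x)) = 0 := by
    rw [map_sub, map_sub, hconj, LinearMap.trace_conj', sub_self]
  apply Algebra.lmul_injective (R := K)
  rw [map_zero]
  exact LinearMap.IsIdempotentElem.eq_zero_of_trace_eq_zero (hx.map (Algebra.lmul K B)) htrace

theorem AlgHom.exists_iterate_eq_zero_of_isIdempotentElem_sub (ψ : B →ₐ[K] B) {y : B}
    (hy : IsIdempotentElem (y - ψ y)) : ∃ N, ψ^[N] (y - ψ y) = 0 := by
  obtain ⟨N, hdisj, hN⟩ := (Module.End.eventually_disjoint_ker_pow_range_pow ψ.toLinearMap).and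
    (Filter.eventually_ge_atTop 1) |>.exists
  have hcomm (w : B) : ψ (ψ^[N] w) = ψ^[N] (ψ w) :=
    (Function.iterate_succ_apply' ψ N w).symm.trans (Function.iterate_succ_apply ψ N w)
  let R := (ψ ^ N).range
  have hmaps (w : R) : ψ w ∈ R := by
    obtain ⟨-, v, rfl⟩ := w
    exact ⟨ψ v, by simp [hcomm]⟩
  let σ := (ψ.comp R.val).codRestrict R hmaps
  have hσ_apply (w : R) : (σ w : B) = ψ w := rfl
  have hσ : Function.Injective σ := by
    rw [injective_iff_map_eq_zero]
    rintro ⟨-, v, rfl⟩ hv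
    have hker : (ψ ^ N) v ∈ LinearMap.ker (ψ.toLinearMap ^ N) :=
      Module.End.pow_map_zero_of_le hN (by
        rw [pow_one]; exact (hσ_apply _).symm.trans (congrArg Subtype.val hv))
    have hrange : (ψ ^ N) v ∈ LinearMap.range (ψ.toLinearMap ^ N) :=
      ⟨v, by simp [Module.End.pow_apply]⟩
    exact Subtype.ext (Submodule.disjoint_def.mp hdisj _ hker hrange)
  let z : R := ⟨ψ^[N] y, y, congrFun (coe_pow ψ N) y⟩
  have hz : ((z - σ z : R) : B) = ψ^[N] (y - ψ y) := by
    rw [Subalgebra.coe_sub, hσ_apply, iterate_map_sub, ← hcomm]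
  have hidem : IsIdempotentElem (z - σ z) := by
    simpa [IsIdempotentElem, ← Subtype.val_inj, hz] using hy.map (ψ ^ N)
  refine ⟨N, ?_⟩
  rw [← hz, σ.sub_apply_eq_zero_of_isIdempotentElem_of_injective hσ hidem]
  rfl

end FiniteDimensional

section LocallyFinite

variable {K A : Type*} [Field K] [Ring A] [Algebra K A]

theorem AlgHom.exists_finiteDimensional_invariant_subalgebra_mem (φ : A →ₐ[K] A)
    (hKC : ∀ s : Finset A, FiniteDimensional K (Algebra.adjoin K (s : Set A))) (y : A)
    (hy : FiniteDimensional K (Submodule.span K (Set.range fun i : ℕ => φ^[i] y))) :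
    ∃ C : Subalgebra K A, FiniteDimensional K C ∧ y ∈ C ∧ ∀ x ∈ C, φ x ∈ C := by
  set W := Submodule.span K (Set.range fun i : ℕ => φ^[i] y)
  obtain ⟨s, hs⟩ := Module.Finite.iff_fg.mp hy
  have hW : Set.MapsTo φ W W := by
    intro w hw
    suffices W.map φ.toLinearMap ≤ W from this ⟨w, hw, rfl⟩
    rw [Submodule.map_span, Submodule.span_le]
    rintro _ ⟨_, ⟨i, rfl⟩, rfl⟩
    exact Submodule.subset_span ⟨i + 1, Function.iterate_succ_apply' φ i y⟩
  refine ⟨Algebra.adjoin K W, ?_, Algebra.subset_adjoin (Submodule.subset_span ⟨0, rfl⟩),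
    fun x hx => ?_⟩
  · rw [← hs, Algebra.adjoin_span]
    exact hKC s
  · have hmap : (Algebra.adjoin K (W : Set A)).map φ ≤ Algebra.adjoin K W := by
      rw [AlgHom.map_adjoin]
      exact Algebra.adjoin_mono hW.image_subset
    exact hmap ⟨x, hx, rfl⟩

theorem AlgHom.exists_iterate_sub_eq_zero_of_isIdempotentElem [CharZero K] (φ : A →ₐ[K] A)
    (hKC : ∀ s : Finset A, FiniteDimensional K (Algebra.adjoin K (s : Set A))) {y : A}
    (hLF : FiniteDimensional K (Submodule.span K (Set.range fun i : ℕ => φ^[i] y)))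
    (hy : IsIdempotentElem (y - φ y)) : ∃ N, φ^[N] (y - φ y) = 0 := by
  obtain ⟨C, _, hyC, hC⟩ := φ.exists_finiteDimensional_invariant_subalgebra_mem hKC y hLF
  let ψ := (φ.comp C.val).codRestrict C fun x => hC x x.2
  have hψ : Function.Semiconj C.val ψ φ := fun _ => rfl
  obtain ⟨N, hN⟩ :=
    ψ.exists_iterate_eq_zero_of_isIdempotentElem_sub (y := ⟨y, hyC⟩) (Subtype.ext hy)
  exact ⟨N, by rw [← map_zero C.val, ← hN, (hψ.iterate_right N).eq]; rfl⟩

end LocallyFinite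

theorem lfed_surjective_endomorphism_general
    (K : Type*) [Field K] [CharZero K]
    (A : Type*) [Ring A] [Algebra K A]
    (hKC : ∀ s : Finset A, FiniteDimensional K (Algebra.adjoin K (s : Set A)))
    (φ : A →ₐ[K] A)
    (hLF : ∀ a : A,
      FiniteDimensional K (Submodule.span K (Set.range fun i : ℕ => (⇑φ)^[i] a))) :
    IsMathieuSubspace
      (LinearMap.range (LinearMap.id - φ.toLinearMap : A →ₗ[K] A)) := by
  intro a b c ha
  have : FiniteDimensional K (Algebra.adjoin K {a}) := Finset.coe_singleton a ▸ hKC {a}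
  obtain ⟨ε, hε_span, hε, N₀, hN₀⟩ := exists_isIdempotentElem_mem_span_and_pow_mul_eq (K := K) a
  obtain ⟨y, rfl⟩ := Submodule.span_le.mpr
    (Set.range_subset_iff.mpr fun m => ha (m + 1) m.succ_pos) hε_span
  obtain ⟨N, hN⟩ := φ.exists_iterate_sub_eq_zero_of_isIdempotentElem hKC (hLF y) hε
  refine ⟨N₀ + 1, by omega, fun m hm => ?_⟩
  have hvanish : φ^[N] (b * a ^ m * c) = 0 := by
    rw [← hN₀ m (by omega)]
    simp [iterate_map_mul, hN]
  simpa [hvanish] using LinearMap.sub_iterate_mem_range_id_sub φ.toLinearMap (b * a ^ m * c) N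

/-- If φ is a locally finite surjective K-algebra endomorphism of A (with A
satisfying (KC)), then the image of I − φ is a Mathieu subspace of A. -/
theorem lfed_surjective_endomorphism
    (K : Type*) [Field K] [CharZero K]
    (A : Type*) [Ring A] [Algebra K A]
    (hKC : ∀ s : Finset A, FiniteDimensional K (Algebra.adjoin K (s : Set A)))
    (φ : A →ₐ[K] A) (hsurj : Function.Surjective φ)
    (hLF : ∀ a : A,
      FiniteDimensional K (Submodule.span K (Set.range fun i : ℕ => (⇑φ)^[i] a))) :
    IsMathieuSubspace
      (LinearMap.range (LinearMap.id - φ.toLinearMap : A →ₗ[K] A)) :=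
  lfed_surjective_endomorphism_general K A hKC φ hLF
end

section
/- Let K be a field of characteristic zero and A a finite dimensional unital K-algebra. Then for every K-algebra endomorphism φ of A, the image of I − φ is a Mathieu subspace of A; and for every K-derivation D of A, the image D(A) is a Mathieu subspace of A. -/
/-
Over a field of characteristic zero, an endomorphism all of whose powers have trace zero is
nilpotent: on the stable image `W` of its powers some power is invertible, and evaluating the
trace on its minimal polynomial gives `(constant coefficient) * dim W = 0`, so `W = 0`.

For a derivation `D`, left multiplication by `D x` is the commutator `[D, L_x]`, hence traceless;
so if all powers of `a` lie in `D(A)`, then `L_a` is nilpotent and so is `a`. For an algebra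
endomorphism `φ`, `φ` restricts to an automorphism of the stable image `B = φⁿ(A)`, and
conjugation by it shows that `L_{φⁿ x}` is traceless on `B` for every `x ∈ (I - φ)(A)`. So
`φⁿ a` is nilpotent, hence `φⁿ (b aᵐ c) = 0` for large `m`, and `ker φⁿ ⊆ (I - φ)(A)` by the
telescoping identity `(1 - φ) (1 + φ + ⋯ + φⁿ⁻¹) = 1 - φⁿ`.
-/

open Polynomial Module

namespace LinearMap

section TracePow

variable {K M : Type*} [Field K] [CharZero K] [AddCommGroup M] [Module K M]
  [FiniteDimensional K M]

theorem finrank_eq_zero_of_injective_of_trace_pow_eq_zero {f : Module.End K M}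
    (hf : Function.Injective f) (htr : ∀ k, 1 ≤ k → trace K M (f ^ k) = 0) :
    finrank K M = 0 := by
  have trace_aeval (p : K[X]) : trace K M (aeval f p) = p.coeff 0 * finrank K M := by
    rw [aeval_eq_sum_range, map_sum, Finset.sum_range_succ']
    simp [htr]
  have h := trace_aeval (minpoly K f)
  rw [minpoly.aeval, map_zero, eq_comm, mul_eq_zero] at h
  exact_mod_cast h.resolve_left (minpoly_coeff_zero_of_injective hf)

theorem isNilpotent_of_trace_pow_eq_zero_s12 (f : Module.End K M)
    (htr : ∀ k, 1 ≤ k → trace K M (f ^ k) = 0) : IsNilpotent f := by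
  obtain ⟨n, hn⟩ := IsArtinian.monotone_stabilizes f.iterateRange
  set W := range (f ^ (n + 1))
  have range_pow_eq (m : ℕ) (hm : n + 1 ≤ m) : range (f ^ m) = W :=
    ((hn m (by omega)).symm.trans (hn (n + 1) n.le_succ) :)
  let g : Module.End K W := (f ^ (n + 1)).restrict fun x _ ↦ mem_range_self (f ^ (n + 1)) x
  have hg : Function.Surjective g := by
    rintro ⟨_, y, rfl⟩
    obtain ⟨z, hz⟩ : (f ^ (n + 1)) y ∈ range (f ^ (n + 1 + (n + 1))) := by
      rw [range_pow_eq _ (by omega)]; exact mem_range_self _ y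
    refine ⟨⟨_, mem_range_self _ z⟩, Subtype.ext ?_⟩
    change (f ^ (n + 1)) ((f ^ (n + 1)) z) = (f ^ (n + 1)) y
    rw [← Module.End.mul_apply, ← pow_add, hz]
  have htr_g (k : ℕ) (hk : 1 ≤ k) : trace K W (g ^ k) = 0 := by
    have hmem (x : M) : (f ^ ((n + 1) * k)) x ∈ W := by
      rw [← range_pow_eq ((n + 1) * k) (Nat.le_mul_of_pos_right _ hk)]
      exact mem_range_self _ x
    rw [← htr _ (Nat.mul_pos n.succ_pos hk), ← trace_restrict_eq_of_forall_mem W _ hmem,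
      Module.End.pow_restrict]
    congr 1
    ext x
    simp [pow_mul]
  have hW : W = ⊥ := Submodule.finrank_eq_zero.1 <|
    finrank_eq_zero_of_injective_of_trace_pow_eq_zero (injective_iff_surjective.2 hg) htr_g
  exact ⟨n + 1, ext fun x ↦ (Submodule.mem_bot K).1 (hW ▸ mem_range_self _ x)⟩

theorem isNilpotent_of_trace_mulLeft_pow_eq_zero {A : Type*} [Ring A] [Algebra K A]
    [FiniteDimensional K A] (a : A) (htr : ∀ k, 1 ≤ k → trace K A (mulLeft K (a ^ k)) = 0) :
    IsNilpotent a :=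
  (isNilpotent_mulLeft_iff K a).1 <| isNilpotent_of_trace_pow_eq_zero_s12 _ fun k hk ↦ by
    rw [pow_mulLeft]
    exact htr k hk

end TracePow

variable {R A : Type*} [CommRing R] [Ring A] [Algebra R A]

theorem trace_mulLeft_algEquiv {B : Type*} [Ring B] [Algebra R B] (e : A ≃ₐ[R] B) (x : A) :
    trace R B (mulLeft R (e x)) = trace R A (mulLeft R x) := by
  rw [← trace_conj' (mulLeft R x) e.toLinearEquiv]
  congr 1
  ext y
  simp [LinearEquiv.conj_apply]

theorem trace_mulLeft_sub (x y : A) :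
    trace R A (mulLeft R (x - y)) = trace R A (mulLeft R x) - trace R A (mulLeft R y) := by
  rw [← map_sub]
  congr 1
  ext
  simp [sub_mul]

theorem trace_mulLeft_apply_derivation_eq_zero (D : A →ₗ[R] A)
    (hD : ∀ a b, D (a * b) = D a * b + a * D b) (x : A) : trace R A (mulLeft R (D x)) = 0 := by
  have hcomm : mulLeft R (D x) = D * mulLeft R x - mulLeft R x * D := by
    ext y
    simp [hD]
  rw [hcomm, map_sub, trace_mul_comm, sub_self]

theorem ker_pow_le_range_id_sub {S M : Type*} [Semiring S] [AddCommGroup M] [Module S M]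
    (f : Module.End S M) (n : ℕ) : ker (f ^ n) ≤ range (LinearMap.id - f) := by
  intro x hx
  refine ⟨(∑ i ∈ Finset.range n, f ^ i) x, ?_⟩
  rw [← Module.End.one_eq_id, ← Module.End.mul_apply, mul_neg_geom_sum, sub_apply, hx, sub_zero]
  rfl

end LinearMap

theorem AlgHom.exists_algEquiv_range_pow {K A : Type*} [Field K] [Ring A] [Algebra K A]
    [FiniteDimensional K A] (φ : A →ₐ[K] A) :
    ∃ (n : ℕ) (e : (φ ^ n).range ≃ₐ[K] (φ ^ n).range),
      ∀ y, e ((φ ^ n).rangeRestrict y) = (φ ^ n).rangeRestrict (φ y) := by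
  obtain ⟨n, hn⟩ := IsArtinian.monotone_stabilizes φ.toLinearMap.iterateRange
  have comm (y : A) : φ ((φ ^ n) y) = (φ ^ n) (φ y) := by
    rw [← AlgHom.mul_apply, ← pow_succ', pow_succ, AlgHom.mul_apply]
  let g : (φ ^ n).range →ₐ[K] (φ ^ n).range :=
    (φ.comp (φ ^ n).range.val).codRestrict _ <| by
      rintro ⟨_, y, rfl⟩
      exact ⟨φ y, (comm y).symm⟩
  have hg : Function.Surjective g := by
    rintro ⟨_, y, rfl⟩
    obtain ⟨z, hz⟩ : (φ ^ n) y ∈ LinearMap.range (φ.toLinearMap ^ (n + 1)) := by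
      have hrange : LinearMap.range (φ.toLinearMap ^ n) =
          LinearMap.range (φ.toLinearMap ^ (n + 1)) := hn (n + 1) n.le_succ
      rw [← hrange]
      exact ⟨y, by simp [Module.End.coe_pow]⟩
    refine ⟨(φ ^ n).rangeRestrict z, Subtype.ext ?_⟩
    simpa [g, Module.End.coe_pow, Function.iterate_succ_apply'] using hz
  have hg' : Function.Injective g :=
    LinearMap.injective_iff_surjective (f := g.toLinearMap) |>.2 hg
  exact ⟨n, AlgEquiv.ofBijective g ⟨hg', hg⟩, fun y ↦ Subtype.ext (comm y)⟩

theorem isMathieuSubspace_of_isNilpotent_map {K A B : Type*} [Field K] [Ring A] [Algebra K A]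
    [Ring B] {V : Submodule K A} (ψ : A →+* B) (hker : ∀ x, ψ x = 0 → x ∈ V)
    (hnil : ∀ a, (∀ m, 1 ≤ m → a ^ m ∈ V) → IsNilpotent (ψ a)) : IsMathieuSubspace V := by
  intro a b c ha
  obtain ⟨N, hN⟩ := hnil a ha
  refine ⟨N + 1, Nat.le_add_left 1 N, fun m hm ↦ hker _ ?_⟩
  rw [map_mul, map_mul, map_pow, pow_eq_zero_of_le (by omega) hN, mul_zero, zero_mul]

section MathieuSubspace

variable {K A : Type*} [Field K] [CharZero K] [Ring A] [Algebra K A] [FiniteDimensional K A]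

open LinearMap

theorem isMathieuSubspace_range_id_sub_algHom (φ : A →ₐ[K] A) :
    IsMathieuSubspace (range (LinearMap.id - φ.toLinearMap : A →ₗ[K] A)) := by
  obtain ⟨n, e, he⟩ := φ.exists_algEquiv_range_pow
  set ψ := (φ ^ n).rangeRestrict
  have trace_mulLeft_eq_zero (x : A) (hx : x ∈ range (LinearMap.id - φ.toLinearMap)) :
      trace K _ (mulLeft K (ψ x)) = 0 := by
    obtain ⟨y, rfl⟩ := hx
    rw [LinearMap.sub_apply, id_apply, AlgHom.toLinearMap_apply, map_sub, ← he, trace_mulLeft_sub,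
      trace_mulLeft_algEquiv, sub_self]
  refine isMathieuSubspace_of_isNilpotent_map ψ.toRingHom
    (fun x hx ↦ ker_pow_le_range_id_sub φ.toLinearMap n ?_)
    fun a ha ↦ isNilpotent_of_trace_mulLeft_pow_eq_zero (K := K) _ fun k hk ↦ ?_
  · simpa [ψ, Subtype.ext_iff, Module.End.coe_pow] using hx
  · rw [← map_pow]
    exact trace_mulLeft_eq_zero _ (ha k hk)

theorem isMathieuSubspace_range_derivation (D : A →ₗ[K] A)
    (hD : ∀ a b, D (a * b) = D a * b + a * D b) : IsMathieuSubspace (range D) :=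
  isMathieuSubspace_of_isNilpotent_map (RingHom.id A) (fun x (hx : x = 0) ↦ hx ▸ zero_mem _)
    fun a ha ↦ isNilpotent_of_trace_mulLeft_pow_eq_zero a fun k hk ↦ by
      obtain ⟨x, hx⟩ := ha k hk
      rw [← hx]
      exact trace_mulLeft_apply_derivation_eq_zero D hD x

end MathieuSubspace

/-- Let K be a field of characteristic zero and A a finite dimensional unital
K-algebra. Then for every K-algebra endomorphism φ of A, the image of I − φ is a Mathieu
subspace of A; and for every K-derivation D of A, the image D(A) is a Mathieu subspace
of A. -/
theorem lfed_finite_dimensional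
    (K : Type*) [Field K] [CharZero K]
    (A : Type*) [Ring A] [Algebra K A] [FiniteDimensional K A] :
    (∀ φ : A →ₐ[K] A,
      IsMathieuSubspace
        (LinearMap.range (LinearMap.id - φ.toLinearMap : A →ₗ[K] A))) ∧
    (∀ D : A →ₗ[K] A, (∀ a b : A, D (a * b) = D a * b + a * D b) →
      IsMathieuSubspace (LinearMap.range D)) :=
  ⟨isMathieuSubspace_range_id_sub_algHom, isMathieuSubspace_range_derivation⟩
end

section
/- Let K be a field of characteristic zero and A a unital K-algebra such that every K-subalgebra of A generated by finitely many elements is finite dimensional over K. If φ is a K-algebra automorphism of A of finite order (i.e., φ^n = I for some n ≥ 1), then the image of I − φ contains no nonzero idempotent of A. -/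
/-!
In characteristic zero the trace of an idempotent operator on a finite-dimensional space is its
rank, so idempotent operators summing to zero all vanish. If `e = x - φ x` is idempotent and
`φ ^ n = 1`, the idempotents `φ ^ k e` for `k < n` telescope to `x - φ ^ n x = 0`; they live in
the finite-dimensional subalgebra generated by the orbit of `e`, where left multiplication turns
them into idempotent operators summing to zero.
-/

open Finset

theorem sum_range_pow_smul_sub_smul {M A : Type*} [Monoid M] [AddCommGroup A]
    [DistribMulAction M A] (g : M) (x : A) (n : ℕ) :
    ∑ k ∈ range n, g ^ k • (x - g • x) = x - g ^ n • x := by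
  simp_rw [smul_sub, smul_smul, ← pow_succ]
  simpa using sum_range_sub' (fun k => g ^ k • x) n

namespace LinearMap

theorem eq_zero_of_sum_eq_zero_of_isIdempotentElem {K V ι : Type*} [Field K]
    [CharZero K] [AddCommGroup V] [Module K V] [FiniteDimensional K V] {s : Finset ι}
    {f : ι → V →ₗ[K] V} (hf : ∀ i ∈ s, IsIdempotentElem (f i)) (hsum : ∑ i ∈ s, f i = 0) :
    ∀ i ∈ s, f i = 0 := by
  have htrace : ∀ i ∈ s, trace K V (f i) = (Module.finrank K (range (f i)) : K) :=
    fun i hi => (IsIdempotentElem.isProj_range (f i) (hf i hi)).trace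
  have hranks : ∑ i ∈ s, Module.finrank K (range (f i)) = 0 := by
    have : ∑ i ∈ s, (Module.finrank K (range (f i)) : K) = 0 := by
      rw [← sum_congr rfl htrace, ← map_sum, hsum, map_zero]
    exact_mod_cast this
  intro i hi
  refine IsIdempotentElem.eq_zero_of_trace_eq_zero (hf i hi) ?_
  rw [htrace i hi, sum_eq_zero_iff.mp hranks i hi, Nat.cast_zero]

end LinearMap

theorem eq_zero_of_sum_eq_zero_of_isIdempotentElem {K B ι : Type*} [Field K] [CharZero K]
    [Ring B] [Algebra K B] [FiniteDimensional K B] {s : Finset ι} {f : ι → B}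
    (hf : ∀ i ∈ s, IsIdempotentElem (f i)) (hsum : ∑ i ∈ s, f i = 0) :
    ∀ i ∈ s, f i = 0 := by
  have hlmul := LinearMap.eq_zero_of_sum_eq_zero_of_isIdempotentElem (s := s)
    (f := fun i => Algebra.lmul K B (f i)) (fun i hi => (hf i hi).map (Algebra.lmul K B))
    (by rw [← map_sum, hsum, map_zero])
  intro i hi
  simpa using congrArg (· 1) (hlmul i hi)

/-- Let K be a field of characteristic zero and A a unital K-algebra
satisfying (KC). If φ is a K-algebra automorphism of A of finite order, then the image of
I − φ contains no nonzero idempotent of A. -/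
theorem finite_order_automorphism_no_idempotent
    (K : Type*) [Field K] [CharZero K]
    (A : Type*) [Ring A] [Algebra K A]
    (hKC : ∀ s : Finset A, FiniteDimensional K (Algebra.adjoin K (s : Set A)))
    (φ : A ≃ₐ[K] A) (hfin : ∃ n : ℕ, 1 ≤ n ∧ φ ^ n = 1)
    (e : A) (he : e * e = e) (heIm : ∃ x : A, e = x - φ x) :
    e = 0 := by
  classical
  obtain ⟨n, hn, hφn⟩ := hfin
  obtain ⟨x, hx⟩ := heIm
  set B := Algebra.adjoin K (((range n).image fun k => (φ ^ k) e : Finset A) : Set A)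
  have : FiniteDimensional K B := hKC _
  have hmem (k : ℕ) : (φ ^ k) e ∈ B := by
    rw [pow_eq_pow_mod k hφn]
    exact Algebra.subset_adjoin (by simpa using ⟨k % n, Nat.mod_lt k hn, rfl⟩)
  let orbit (k : ℕ) : B := ⟨(φ ^ k) e, hmem k⟩
  have hidem (k : ℕ) : IsIdempotentElem (orbit k) :=
    Subtype.ext (IsIdempotentElem.map he (φ ^ k))
  have hsum : ∑ k ∈ range n, orbit k = 0 := Subtype.ext <| by
    simpa [orbit, hφn, hx] using sum_range_pow_smul_sub_smul φ x n
  have horbit_zero : orbit 0 = 0 :=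
    eq_zero_of_sum_eq_zero_of_isIdempotentElem (K := K) (fun k _ => hidem k) hsum 0
      (mem_range.2 hn)
  simpa [orbit] using congrArg Subtype.val horbit_zero
end

section
/- Let K be a field (of arbitrary characteristic) and A a unital K-algebra that is algebraic over K (every element of A is a root of a nonzero polynomial over K). Then a K-subspace V of A is a Mathieu subspace of A if and only if for every idempotent e ∈ V, the two-sided ideal of A generated by e is contained in V. -/
open Polynomial

theorem TwoSidedIdeal.span_subset_of_mul_mul_mem {R : Type*} [Ring R] {s : Set R}
    {V : AddSubgroup R} (h : ∀ x ∈ s, ∀ b c : R, b * x * c ∈ V) :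
    (TwoSidedIdeal.span s : Set R) ⊆ V := by
  intro x hx
  rw [SetLike.mem_coe, mem_span_iff_mem_addSubgroup_closure] at hx
  refine (AddSubgroup.closure_le V).2 ?_ hx
  rintro _ ⟨_, ⟨b, -, y, hy, rfl⟩, c, -, rfl⟩
  exact h y hy b c

theorem Polynomial.exists_idempotent_mod {K : Type*} [Field K] {p : K[X]} (hp : p ≠ 0) :
    ∃ f : K[X], X ∣ f ∧ p ∣ f * f - f ∧ ∃ k, 1 ≤ k ∧ p ∣ f * X ^ k - X ^ k := by
  have hXp : X * p ≠ 0 := mul_ne_zero X_ne_zero hp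
  obtain ⟨q, hpq, hqX⟩ := (X * p).exists_eq_pow_rootMultiplicity_mul_and_not_dvd hXp 0
  set k := (X * p).rootMultiplicity 0
  rw [C_0, sub_zero] at hpq hqX
  have hk : 1 ≤ k := (rootMultiplicity_pos hXp).2 (by simp [IsRoot])
  obtain ⟨u, v, huv⟩ := ((irreducible_X.coprime_iff_not_dvd).2 hqX).pow_left (m := k)
  have hdvd : p ∣ X * p := dvd_mul_left p X
  refine ⟨u * X ^ k, dvd_mul_of_dvd_right (dvd_pow_self X (by omega)) u, ?_, k, hk, ?_⟩
  · refine hdvd.trans ⟨-(u * v), ?_⟩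
    linear_combination (u * X ^ k) * huv + (u * v) * hpq
  · refine hdvd.trans ⟨-v, ?_⟩
    linear_combination (X ^ k) * huv + v * hpq

section Algebra

variable {K : Type*} [Field K] {A : Type*} [Ring A] [Algebra K A]

theorem IsAlgebraic.exists_isIdempotentElem_aeval {a : A} (ha : IsAlgebraic K a) :
    ∃ f : K[X], X ∣ f ∧ IsIdempotentElem (aeval a f) ∧
      ∃ k, 1 ≤ k ∧ ∀ m, k ≤ m → aeval a f * a ^ m = a ^ m := by
  obtain ⟨p, hp, hpa⟩ := ha
  obtain ⟨f, hXf, hidem, k, hk, hpow⟩ := exists_idempotent_mod hp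
  have hvanish {g : K[X]} (hg : p ∣ g) : aeval a g = 0 := aeval_eq_zero_of_dvd_aeval_eq_zero hg hpa
  refine ⟨f, hXf, ?_, k, hk, fun m hm => ?_⟩
  · simpa [IsIdempotentElem, sub_eq_zero] using hvanish hidem
  · have hk' : aeval a f * a ^ k = a ^ k := by simpa [sub_eq_zero] using hvanish hpow
    rw [← Nat.add_sub_cancel' hm, pow_add, ← mul_assoc, hk']

theorem Submodule.aeval_mem_of_pow_mem {V : Submodule K A} {a : A}
    (ha : ∀ m : ℕ, 1 ≤ m → a ^ m ∈ V) {f : K[X]} (hf : X ∣ f) : aeval a f ∈ V := by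
  rw [aeval_eq_sum_range]
  refine V.sum_mem fun i _ => ?_
  rcases Nat.eq_zero_or_pos i with rfl | hi
  · simp [X_dvd_iff.1 hf]
  · exact V.smul_mem _ (ha i hi)

theorem IsMathieuSubspace.mul_mul_mem_of_isIdempotentElem {V : Submodule K A}
    (hV : IsMathieuSubspace V) {e : A} (heV : e ∈ V) (he : IsIdempotentElem e) (b c : A) :
    b * e * c ∈ V := by
  obtain ⟨N, hN, hmem⟩ := hV e b c fun m hm => by rwa [he.pow_eq (by omega)]
  simpa [he.pow_eq (by omega : N ≠ 0)] using hmem N le_rfl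

end Algebra

/-- Let K be a field of arbitrary characteristic and A a unital K-algebra
that is algebraic over K. Then a K-subspace V of A is a Mathieu subspace of A if and only
if for every idempotent e ∈ V the two-sided ideal of A generated by e is contained in V. -/
theorem mathieu_subspace_iff_idempotents
    (K : Type*) [Field K]
    (A : Type*) [Ring A] [Algebra K A]
    (halg : ∀ a : A, IsAlgebraic K a)
    (V : Submodule K A) :
    IsMathieuSubspace V ↔
      ∀ e : A, e ∈ V → e * e = e →
        ∀ x : A, x ∈ TwoSidedIdeal.span {e} → x ∈ V := by
  constructor
  · intro hV e heV he x hx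
    refine TwoSidedIdeal.span_subset_of_mul_mul_mem (V := V.toAddSubgroup) ?_ hx
    rintro _ rfl
    exact hV.mul_mul_mem_of_isIdempotentElem heV he
  · intro hideal a b c ha
    obtain ⟨f, hXf, he, k, hk, habsorb⟩ := (halg a).exists_isIdempotentElem_aeval
    have heV : aeval a f ∈ V := V.aeval_mem_of_pow_mem ha hXf
    refine ⟨k, hk, fun m hm => ?_⟩
    rw [mul_assoc, ← habsorb m hm, mul_assoc, ← mul_assoc]
    exact hideal _ heV he _ <| TwoSidedIdeal.mul_mem_right _ _ _ <|
      TwoSidedIdeal.mul_mem_left _ _ _ <| TwoSidedIdeal.subset_span rfl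
end
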